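/- Let r, s, m be complex numbers with r ≠ 0, r ≠ 1, s ≠ 0, and set η = m/(1 − r). Let G be the 3×3 matrix equal to the identity except for entry (1,2) = η, and let G ⊗ G be its Kronecker square indexed by (Fin 3 × Fin 3). Then (G ⊗ G)⁻¹ * R(G_{r,s}) * (G ⊗ G) equals the matrix M indexed by (Fin 3 × Fin 3) whose only nonzero entries are: M((1,1),(1,1)) = r, M((1,1),(1,2)) = −m, M((1,1),(2,1)) = m·r⁻¹, M((1,1),(2,2)) = m²·r⁻¹, M((1,2),(1,2)) = 1, M((1,2),(2,1)) = r − r⁻¹, M((1,2),(2,2)) = −m·r⁻¹, M((2,1),(2,1)) = 1, M((2,1),(2,2)) = m, M((2,2),(2,2)) = r, M((1,3),(1,3)) = s, M((1,3),(2,3)) = m·(s − 1)/(1 − r), M((1,3),(3,1)) = r − r⁻¹, M((2,3),(2,3)) = 1, M((2,3),(3,2)) = r − r⁻¹, M((3,1),(3,1)) = s⁻¹, M((3,1),(3,2)) = m·s⁻¹·(1 − s)/(1 − r), M((3,2),(3,2)) = 1, M((3,3),(3,3)) = r. -/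
import Mathlib


noncomputable section

open Matrix

/-- The `R`-matrix of the quantum group `G_{r,s}`, indexed by `Fin 3 × Fin 3`
(indices `0,1,2` correspond to the paper's `1,2,3`). -/
def Rgrs (r s : ℂ) : Matrix (Fin 3 × Fin 3) (Fin 3 × Fin 3) ℂ :=
  fun p q =>
    if p = (0, 0) ∧ q = (0, 0) then r
    else if p = (1, 1) ∧ q = (1, 1) then r
    else if p = (2, 2) ∧ q = (2, 2) then r
    else if p = (0, 1) ∧ q = (0, 1) then 1
    else if p = (1, 0) ∧ q = (1, 0) then 1
    else if p = (1, 2) ∧ q = (1, 2) then 1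
    else if p = (2, 1) ∧ q = (2, 1) then 1
    else if p = (0, 2) ∧ q = (0, 2) then s
    else if p = (2, 0) ∧ q = (2, 0) then s⁻¹
    else if p = (0, 1) ∧ q = (1, 0) then r - r⁻¹
    else if p = (0, 2) ∧ q = (2, 0) then r - r⁻¹
    else if p = (1, 2) ∧ q = (2, 1) then r - r⁻¹
    else 0

/-- The `3×3` transformation matrix `G`: the identity except for entry `(1,2) = η`
(`0`-based: `(0,1) = η`). -/
def Gmat (η : ℂ) : Matrix (Fin 3) (Fin 3) ℂ :=
  !![1, η, 0; 0, 1, 0; 0, 0, 1]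

/-- Kronecker square of a `3×3` matrix, indexed by `Fin 3 × Fin 3`. -/
def kron3 (G : Matrix (Fin 3) (Fin 3) ℂ) :
    Matrix (Fin 3 × Fin 3) (Fin 3 × Fin 3) ℂ :=
  fun p q => G p.1 q.1 * G p.2 q.2

/-- The matrix obtained by the similarity transformation of `R(G_{r,s})` with
`η = m/(1-r)` substituted, as displayed in Section III of the paper. -/
def Mtrans (r s m : ℂ) : Matrix (Fin 3 × Fin 3) (Fin 3 × Fin 3) ℂ :=
  fun p q =>
    if p = (0, 0) ∧ q = (0, 0) then r
    else if p = (0, 0) ∧ q = (0, 1) then -m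
    else if p = (0, 0) ∧ q = (1, 0) then m * r⁻¹
    else if p = (0, 0) ∧ q = (1, 1) then m ^ 2 * r⁻¹
    else if p = (0, 1) ∧ q = (0, 1) then 1
    else if p = (0, 1) ∧ q = (1, 0) then r - r⁻¹
    else if p = (0, 1) ∧ q = (1, 1) then -(m * r⁻¹)
    else if p = (1, 0) ∧ q = (1, 0) then 1
    else if p = (1, 0) ∧ q = (1, 1) then m
    else if p = (1, 1) ∧ q = (1, 1) then r
    else if p = (0, 2) ∧ q = (0, 2) then s
    else if p = (0, 2) ∧ q = (1, 2) then m * (s - 1) / (1 - r)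
    else if p = (0, 2) ∧ q = (2, 0) then r - r⁻¹
    else if p = (1, 2) ∧ q = (1, 2) then 1
    else if p = (1, 2) ∧ q = (2, 1) then r - r⁻¹
    else if p = (2, 0) ∧ q = (2, 0) then s⁻¹
    else if p = (2, 0) ∧ q = (2, 1) then m * s⁻¹ * (1 - s) / (1 - r)
    else if p = (2, 1) ∧ q = (2, 1) then 1
    else if p = (2, 2) ∧ q = (2, 2) then r
    else 0


lemma kron3_mul (a b : ℂ) : kron3 (Gmat a) * kron3 (Gmat b) = kron3 (Gmat (a + b)) := by
  ext ⟨i, j⟩ ⟨k, l⟩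
  simp only [kron3, Gmat, Matrix.mul_apply, Fintype.sum_prod_type, Fin.sum_univ_three]
  fin_cases i <;> fin_cases j <;> fin_cases k <;> fin_cases l <;>
    simp [Matrix.vecHead, Matrix.vecTail] <;> ring

lemma kron3_zero : kron3 (Gmat 0) = 1 := by
  ext ⟨i, j⟩ ⟨k, l⟩
  fin_cases i <;> fin_cases j <;> fin_cases k <;> fin_cases l <;>
    simp [kron3, Gmat, Matrix.one_apply, Prod.ext_iff, Matrix.vecHead, Matrix.vecTail]

lemma kron3_inv (a : ℂ) : (kron3 (Gmat a))⁻¹ = kron3 (Gmat (-a)) := by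
  apply Matrix.inv_eq_left_inv
  rw [kron3_mul]
  simp [kron3_zero]

/-- Intermediate matrix: `Rgrs r s * kron3 (Gmat (m / (1 - r)))`. -/
def Cmid (r s m : ℂ) : Matrix (Fin 3 × Fin 3) (Fin 3 × Fin 3) ℂ :=
  fun p q =>
    if p = (0, 0) ∧ q = (0, 0) then r
    else if p = (0, 0) ∧ q = (0, 1) then r * (m / (1 - r))
    else if p = (0, 0) ∧ q = (1, 0) then r * (m / (1 - r))
    else if p = (0, 0) ∧ q = (1, 1) then r * (m / (1 - r)) ^ 2
    else if p = (0, 1) ∧ q = (0, 1) then 1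
    else if p = (0, 1) ∧ q = (1, 0) then r - r⁻¹
    else if p = (0, 1) ∧ q = (1, 1) then (1 + r - r⁻¹) * (m / (1 - r))
    else if p = (0, 2) ∧ q = (0, 2) then s
    else if p = (0, 2) ∧ q = (1, 2) then s * (m / (1 - r))
    else if p = (0, 2) ∧ q = (2, 0) then r - r⁻¹
    else if p = (0, 2) ∧ q = (2, 1) then (r - r⁻¹) * (m / (1 - r))
    else if p = (1, 0) ∧ q = (1, 0) then 1
    else if p = (1, 0) ∧ q = (1, 1) then m / (1 - r)
    else if p = (1, 1) ∧ q = (1, 1) then r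
    else if p = (1, 2) ∧ q = (1, 2) then 1
    else if p = (1, 2) ∧ q = (2, 1) then r - r⁻¹
    else if p = (2, 0) ∧ q = (2, 0) then s⁻¹
    else if p = (2, 0) ∧ q = (2, 1) then s⁻¹ * (m / (1 - r))
    else if p = (2, 1) ∧ q = (2, 1) then 1
    else if p = (2, 2) ∧ q = (2, 2) then r
    else 0

set_option maxHeartbeats 1600000 in
lemma step1 (r s m : ℂ) :
    Rgrs r s * kron3 (Gmat (m / (1 - r))) = Cmid r s m := by
  ext ⟨i, j⟩ ⟨k, l⟩
  fin_cases i <;> fin_cases j <;> fin_cases k <;> fin_cases l <;>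
  · simp [Rgrs, kron3, Gmat, Cmid, Matrix.mul_apply, Fintype.sum_prod_type,
      Fin.sum_univ_three, Matrix.vecHead, Matrix.vecTail, Prod.ext_iff]
    try (first | ring1 | (left; trivial) | (left; ring1))

set_option maxHeartbeats 1600000 in
lemma step2 (r s m : ℂ) (hr0 : r ≠ 0) (hr1 : r ≠ 1) (hs : s ≠ 0) :
    kron3 (Gmat (-(m / (1 - r)))) * Cmid r s m = Mtrans r s m := by
  have h1r : (1 : ℂ) - r ≠ 0 := sub_ne_zero.mpr (Ne.symm hr1)
  obtain ⟨e, he⟩ : ∃ e, m / (1 - r) = e := ⟨_, rfl⟩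
  have hm : m = e * (1 - r) := by rw [← he]; field_simp
  rw [he, hm]
  ext ⟨i, j⟩ ⟨k, l⟩
  fin_cases i <;> fin_cases j <;> fin_cases k <;> fin_cases l <;>
  · simp [Cmid, kron3, Gmat, Mtrans, Matrix.mul_apply, Fintype.sum_prod_type,
      Fin.sum_univ_three, Matrix.vecHead, Matrix.vecTail, Prod.ext_iff]
    try (first | ring1 | (left; trivial) | (left; ring1) | (field_simp; ring1) | (left; field_simp; ring1))

/-- the similarity transformation of `R(G_{r,s})` by `G ⊗ G`, with
`η = m/(1-r)`, equals the explicit matrix `Mtrans r s m`. -/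
theorem Grs_similarity_transform (r s m : ℂ) (hr0 : r ≠ 0) (hr1 : r ≠ 1) (hs : s ≠ 0) :
    (kron3 (Gmat (m / (1 - r))))⁻¹ * Rgrs r s * kron3 (Gmat (m / (1 - r))) =
      Mtrans r s m := by
  rw [kron3_inv, Matrix.mul_assoc, step1, step2 r s m hr0 hr1 hs]
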